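/- Let s ∈ (0, 1], let λ₀ > 0, and let y ∈ ℝ^n satisfy ‖y‖₂ = 1 and ‖y‖_∞ ≤ λ₀. Let a₁, …, a_n be i.i.d. real random variables, each equal to 0 with probability 1−s and distributed as N(0, 1/s) with probability s, and set Y = Σ_{j=1}^n a_j·y_j. Then for every μ with 0 < μ ≤ 2√(2s)/λ₀, one has P(|Y| ≥ μ) ≤ 2e^{−μ²/4}. Consequently, if A ∈ ℝ^{m×n} is a sparse Gaussian random matrix with sparsity parameter s, then P( ‖A·y‖_∞ ≥ μ ) ≤ 2m·e^{−μ²/4}. -/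

import Mathlib

open MeasureTheory ProbabilityTheory Real
open scoped NNReal ENNReal

noncomputable section

/-- Matrix–vector product for matrices represented as functions. -/
def matVec {a b : ℕ} (M : Fin a → Fin b → ℝ) (x : Fin b → ℝ) : Fin a → ℝ :=
  fun i => ∑ j, M i j * x j

/-- Matrix–matrix product for matrices represented as functions. -/
def matMul {a b c : ℕ} (M : Fin a → Fin b → ℝ) (N : Fin b → Fin c → ℝ) :
    Fin a → Fin c → ℝ :=
  fun i k => ∑ j, M i j * N j k

/-- Powers of a square matrix represented as a function. -/
def matPow {a : ℕ} (M : Fin a → Fin a → ℝ) : ℕ → (Fin a → Fin a → ℝ)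
  | 0 => fun i j => if i = j then 1 else 0
  | k + 1 => matMul (matPow M k) M

/-- The ℓ¹ norm on ℝ^k. -/
def l1Norm {k : ℕ} (x : Fin k → ℝ) : ℝ := ∑ i, |x i|

/-- The ℓ² norm on ℝ^k. -/
def l2Norm {k : ℕ} (x : Fin k → ℝ) : ℝ := Real.sqrt (∑ i, (x i) ^ 2)

/-- The ℓ^∞ norm on ℝ^k. -/
def lInfNorm {k : ℕ} (x : Fin k → ℝ) : ℝ := ⨆ i, |x i|

/-- The (∞,1) operator norm: `max_{x ≠ 0} ‖Kx‖₁ / ‖x‖_∞`. -/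
def opNormInfOne {a b : ℕ} (K : Fin a → Fin b → ℝ) : ℝ :=
  sSup {t : ℝ | ∃ x : Fin b → ℝ, x ≠ 0 ∧ t = l1Norm (matVec K x) / lInfNorm x}

/-- The (∞,∞) operator norm: `max_{x ≠ 0} ‖Kx‖_∞ / ‖x‖_∞`. -/
def opNormInfInf {a b : ℕ} (K : Fin a → Fin b → ℝ) : ℝ :=
  sSup {t : ℝ | ∃ x : Fin b → ℝ, x ≠ 0 ∧ t = lInfNorm (matVec K x) / lInfNorm x}

/-- The law `(1-s)·δ₀ + s·N(0,1/s)` of a single entry of a sparse Gaussian random matrix. -/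
def sparseGaussianLaw (s : ℝ) : Measure ℝ :=
  (Real.toNNReal (1 - s)) • Measure.dirac (0 : ℝ) +
    (Real.toNNReal s) • gaussianReal 0 (Real.toNNReal s)⁻¹

/-- The law of a sparse Gaussian random matrix with i.i.d. entries of law
`(1-s)·δ₀ + s·N(0,1/s)`. -/
def sparseGaussianMatrixLaw (m n : ℕ) (s : ℝ) : Measure (Fin m → Fin n → ℝ) :=
  Measure.pi fun _ : Fin m => Measure.pi fun _ : Fin n => sparseGaussianLaw s

/-- The uniform law on `{-1, 1}`. -/
def signLaw : Measure ℝ :=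
  ((2 : ℝ≥0)⁻¹) • Measure.dirac (1 : ℝ) + ((2 : ℝ≥0)⁻¹) • Measure.dirac (-1 : ℝ)

/-- The law of a vector of i.i.d. uniform ±1 signs. -/
def signVecLaw (n : ℕ) : Measure (Fin n → ℝ) := Measure.pi fun _ : Fin n => signLaw

/-- Bitwise dot product of the binary representations of two natural numbers. -/
def bitDot (i j : ℕ) : ℕ :=
  ∑ k ∈ Finset.range i.size, if i.testBit k && j.testBit k then 1 else 0

/-- The normalized Walsh–Hadamard matrix `H_{ij} = n^{-1/2} (-1)^{⟨i,j⟩}` (0-indexed). -/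
def walshHadamard (n : ℕ) : Fin n → Fin n → ℝ :=
  fun i j => (Real.sqrt n)⁻¹ * (-1 : ℝ) ^ bitDot (i : ℕ) (j : ℕ)

/-- The fast Johnson–Lindenstrauss transform `Φ = A·H·D` where `D = diag d`. -/
def fjlt {m n : ℕ} (A : Fin m → Fin n → ℝ) (d : Fin n → ℝ) : Fin m → Fin n → ℝ :=
  matMul A (matMul (walshHadamard n) (fun i j => if i = j then d i else 0))

/-- The coefficient of `z^j` in `(1 + z + ⋯ + z^{lt-1})^r`. -/
def condCoeff (r lt : ℕ) (j : ℕ) : ℝ :=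
  ((∑ i ∈ Finset.range lt, (Polynomial.X : Polynomial ℝ) ^ i) ^ r).coeff j

/-- The condensation vector `v ∈ ℝ^λ` of order `r`. -/
def condVec (r lt lam : ℕ) : Fin lam → ℝ := fun j => condCoeff r lt (j : ℕ)

/-- The block matrix `I_p ⊗ v ∈ ℝ^{p × (λp)}` built from a row vector `v ∈ ℝ^λ`. -/
def kronRow {lam p : ℕ} (v : Fin lam → ℝ) (i : Fin p) (c : Fin (lam * p)) : ℝ :=
  if (c : ℕ) / lam = (i : ℕ) then
    v ⟨(c : ℕ) % lam, Nat.mod_lt _ (Nat.pos_of_ne_zero fun h => absurd c.isLt (by simp [h]))⟩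
  else 0

/-- The condensation operator `V = I_p ⊗ v`. -/
def condOp (r lt lam p : ℕ) : Fin p → Fin (lam * p) → ℝ :=
  kronRow (condVec r lt lam)

/-- The normalized condensation operator `Ṽ = (√(π/2)/(p‖v‖₂)) V`. -/
def normCondOp (r lt lam p : ℕ) : Fin p → Fin (lam * p) → ℝ :=
  fun i c => (Real.sqrt (Real.pi / 2) / ((p : ℝ) * l2Norm (condVec r lt lam))) *
    condOp r lt lam p i c

/-- The first-order difference matrix `P`. -/
def diffMat (m : ℕ) : Fin m → Fin m → ℝ :=
  fun i j => if (i : ℕ) = (j : ℕ) then 1 else if (i : ℕ) = (j : ℕ) + 1 then -1 else 0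

/-- Pairing `(i, k) ↦ i·λ + k` as an index into `Fin (λ·p)`. -/
def finPair {p lam : ℕ} (i : Fin p) (k : Fin lam) : Fin (lam * p) :=
  ⟨(i : ℕ) * lam + (k : ℕ), by
    calc (i : ℕ) * lam + (k : ℕ) < (i : ℕ) * lam + lam := Nat.add_lt_add_left k.isLt _
      _ = ((i : ℕ) + 1) * lam := by ring
      _ ≤ p * lam := Nat.mul_le_mul_right lam i.isLt
      _ = lam * p := Nat.mul_comm p lam⟩

/-- The Kronecker product `v^T ⊗ y ∈ ℝ^{λn}`, whose `(k·n + j)`-th entry is `v_k · y_j`. -/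
def kronVec {lam n : ℕ} (v : Fin lam → ℝ) (y : Fin n → ℝ) : Fin (lam * n) → ℝ :=
  fun c =>
    have hn : 0 < n := Nat.pos_of_ne_zero fun h => absurd c.isLt (by simp [h])
    v ⟨(c : ℕ) / n, (Nat.div_lt_iff_lt_mul hn).mpr c.isLt⟩ * y ⟨(c : ℕ) % n, Nat.mod_lt _ hn⟩

/-- Reshaping of an `(λp) × n` matrix into a `p × (λn)` matrix, with
`B_{i, k·n + j} = A_{i·λ + k, j}`. -/
def reshapeMat {lam p n : ℕ} (A : Fin (lam * p) → Fin n → ℝ) :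
    Fin p → Fin (lam * n) → ℝ :=
  fun i c =>
    have hn : 0 < n := Nat.pos_of_ne_zero fun h => absurd c.isLt (by simp [h])
    A (finPair i ⟨(c : ℕ) / n, (Nat.div_lt_iff_lt_mul hn).mpr c.isLt⟩)
      ⟨(c : ℕ) % n, Nat.mod_lt _ hn⟩

/-- The support `n_j = σ·j² + 1` (zero-indexed `j`, i.e. `σ(j-1)²+1` one-indexed). -/
def sigmaDeltaIdx (σ : ℕ) {r : ℕ} (j : Fin r) : ℕ := σ * (j : ℕ) ^ 2 + 1

/-- The filter coefficient `d_j = ∏_{i ≠ j} n_i / (n_i - n_j)`. -/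
def sigmaDeltaCoef (σ : ℕ) {r : ℕ} (j : Fin r) : ℝ :=
  ∏ i ∈ Finset.univ.erase j,
    (sigmaDeltaIdx σ i : ℝ) / ((sigmaDeltaIdx σ i : ℝ) - (sigmaDeltaIdx σ j : ℝ))

end

/-! Chernoff's bound at `t = μ / 2`. A single entry has moment generating function
`c ↦ 1 - s + s exp (c² / 2s)`, which is at most `1 + c² ≤ exp c²` as long as `c² ≤ 2s`, since
`exp x ≤ 1 + 2x` on `[0, 1]`. For `c = μ yⱼ / 2` that constraint is what `‖y‖_∞ ≤ λ₀` and
`μ ≤ 2√(2s)/λ₀` guarantee, so by independence `E exp (μY/2) ≤ exp (μ² ‖y‖₂² / 4) = exp (μ²/4)` and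
Markov's inequality gives `P(Y ≥ μ) ≤ exp (-μ²/2 + μ²/4)`. Applying this to `±y`, and then to
each of the `m` rows of `A` with a union bound, gives both claims. -/

open Finset

section ProductChernoff

variable {ι : Type*} [Fintype ι]

theorem exp_mul_sum_mul_eq_prod (t : ℝ) (x z : ι → ℝ) :
    exp (t * ∑ i, x i * z i) = ∏ i, exp (t * z i * x i) := by
  rw [← Real.exp_sum, Finset.mul_sum]
  exact congrArg exp (Finset.sum_congr rfl fun i _ => by ring)

theorem integrable_exp_mul_sum_mul_pi {ν : ι → Measure ℝ} [∀ i, SigmaFinite (ν i)]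
    {z : ι → ℝ} {t : ℝ} (h : ∀ i, Integrable (fun u => exp (t * z i * u)) (ν i)) :
    Integrable (fun x : ι → ℝ => exp (t * ∑ i, x i * z i)) (Measure.pi ν) := by
  simp_rw [exp_mul_sum_mul_eq_prod]
  exact Integrable.fintype_prod h

theorem mgf_sum_mul_pi (ν : ι → Measure ℝ) [∀ i, SigmaFinite (ν i)] (z : ι → ℝ) (t : ℝ) :
    mgf (fun x : ι → ℝ => ∑ i, x i * z i) (Measure.pi ν) t = ∏ i, mgf id (ν i) (t * z i) := by
  simp_rw [mgf, exp_mul_sum_mul_eq_prod]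
  exact integral_fintype_prod_eq_prod (fun i u => exp (t * z i * u))

theorem measureReal_pi_sum_mul_ge_le (ν : ι → Measure ℝ) [∀ i, IsProbabilityMeasure (ν i)]
    (z : ι → ℝ) {t : ℝ} (ht : 0 ≤ t) (ε : ℝ)
    (h : ∀ i, Integrable (fun u => exp (t * z i * u)) (ν i)) :
    (Measure.pi ν).real {x | ε ≤ ∑ i, x i * z i} ≤ exp (-t * ε) * ∏ i, mgf id (ν i) (t * z i) :=
  mgf_sum_mul_pi ν z t ▸ measure_ge_le_exp_mul_mgf ε ht (integrable_exp_mul_sum_mul_pi h)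

end ProductChernoff

section SparseGaussian

variable {s : ℝ}

theorem isProbabilityMeasure_sparseGaussianLaw (hs0 : 0 ≤ s) (hs1 : s ≤ 1) :
    IsProbabilityMeasure (sparseGaussianLaw s) := by
  constructor
  simp only [sparseGaussianLaw, Measure.add_apply, Measure.smul_apply, measure_univ]
  rw [ENNReal.smul_def, ENNReal.smul_def, smul_eq_mul, smul_eq_mul, mul_one, mul_one,
    ← ENNReal.coe_add, ← Real.toNNReal_add (by linarith) hs0]
  simp

theorem integrable_exp_mul_sparseGaussianLaw (s c : ℝ) :
    Integrable (fun x => exp (c * x)) (sparseGaussianLaw s) :=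
  ((integrable_dirac (by simp)).smul_measure ENNReal.coe_ne_top).add_measure
    ((integrable_exp_mul_gaussianReal c).smul_measure ENNReal.coe_ne_top)

theorem mgf_id_sparseGaussianLaw (hs0 : 0 < s) (hs1 : s ≤ 1) (c : ℝ) :
    mgf id (sparseGaussianLaw s) c = 1 - s + s * exp (c ^ 2 / (2 * s)) := by
  have h := integrable_exp_mul_sparseGaussianLaw s c
  rw [sparseGaussianLaw] at h ⊢
  rw [mgf_add_measure (X := id) h.left_of_add_measure h.right_of_add_measure, ENNReal.smul_def,
    ENNReal.smul_def s.toNNReal, mgf_smul_measure, mgf_smul_measure, mgf_dirac',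
    mgf_id_gaussianReal]
  simp only [ENNReal.coe_toReal, NNReal.coe_inv, Real.coe_toNNReal _ hs0.le,
    Real.coe_toNNReal _ (sub_nonneg.2 hs1), id_eq, mul_zero, zero_mul, zero_add, exp_zero, mul_one]
  rw [show s⁻¹ * c ^ 2 / 2 = c ^ 2 / (2 * s) by ring]

theorem mgf_id_sparseGaussianLaw_le (hs0 : 0 < s) (hs1 : s ≤ 1) {c : ℝ} (hc : c ^ 2 ≤ 2 * s) :
    mgf id (sparseGaussianLaw s) c ≤ exp (c ^ 2) := by
  set x := c ^ 2 / (2 * s) with hx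
  have hx0 : 0 ≤ x := by positivity
  have hx1 : x ≤ 1 := div_le_one_of_le₀ hc (by positivity)
  have hexp : exp x ≤ 1 + 2 * x := by
    have h := abs_exp_sub_one_le (x := x) (by rwa [abs_of_nonneg hx0])
    rw [abs_of_nonneg hx0] at h
    linarith [(abs_le.1 h).2]
  calc mgf id (sparseGaussianLaw s) c = 1 - s + s * exp x := mgf_id_sparseGaussianLaw hs0 hs1 c
    _ ≤ 1 - s + s * (1 + 2 * x) := by gcongr
    _ = 1 + c ^ 2 := by rw [hx]; field_simp; ring
    _ ≤ exp (c ^ 2) := by linarith [add_one_le_exp (c ^ 2)]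

variable {ι : Type*} [Fintype ι] {z : ι → ℝ} {μ : ℝ}

theorem measure_pi_sparseGaussianLaw_sum_mul_ge_le (hs0 : 0 < s) (hs1 : s ≤ 1)
    (hz : ∑ i, z i ^ 2 = 1) (hμ : 0 ≤ μ) (hμz : ∀ i, (μ / 2 * z i) ^ 2 ≤ 2 * s) :
    (Measure.pi fun _ : ι => sparseGaussianLaw s) {x | μ ≤ ∑ i, x i * z i}
      ≤ ENNReal.ofReal (exp (-μ ^ 2 / 4)) := by
  have := isProbabilityMeasure_sparseGaussianLaw hs0.le hs1
  rw [← ofReal_measureReal]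
  refine ENNReal.ofReal_le_ofReal ((measureReal_pi_sum_mul_ge_le _ z (t := μ / 2) (by positivity) μ
    fun i => integrable_exp_mul_sparseGaussianLaw s _).trans ?_)
  calc exp (-(μ / 2) * μ) * ∏ i, mgf id (sparseGaussianLaw s) (μ / 2 * z i)
      ≤ exp (-(μ / 2) * μ) * ∏ i, exp ((μ / 2 * z i) ^ 2) :=
        mul_le_mul_of_nonneg_left (prod_le_prod (fun _ _ => mgf_nonneg)
          fun i _ => mgf_id_sparseGaussianLaw_le hs0 hs1 (hμz i)) (exp_nonneg _)
    _ = exp (-μ ^ 2 / 4) := by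
        rw [← exp_sum, ← exp_add]
        simp_rw [mul_pow]
        rw [← mul_sum, hz]
        ring_nf

theorem measure_pi_sparseGaussianLaw_abs_sum_mul_ge_le (hs0 : 0 < s) (hs1 : s ≤ 1)
    (hz : ∑ i, z i ^ 2 = 1) (hμ : 0 ≤ μ) (hμz : ∀ i, (μ / 2 * z i) ^ 2 ≤ 2 * s) :
    (Measure.pi fun _ : ι => sparseGaussianLaw s) {x | μ ≤ |∑ i, x i * z i|}
      ≤ ENNReal.ofReal (2 * exp (-μ ^ 2 / 4)) := by
  have hsplit : {x : ι → ℝ | μ ≤ |∑ i, x i * z i|}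
      ⊆ {x | μ ≤ ∑ i, x i * z i} ∪ {x | μ ≤ ∑ i, x i * -z i} := fun x (hx : μ ≤ |_|) =>
    (le_abs.1 hx).imp id fun h => show μ ≤ _ by simpa only [mul_neg, sum_neg_distrib] using h
  calc _ ≤ _ := measure_mono hsplit
    _ ≤ _ := measure_union_le _ _
    _ ≤ ENNReal.ofReal (exp (-μ ^ 2 / 4)) + ENNReal.ofReal (exp (-μ ^ 2 / 4)) := add_le_add
        (measure_pi_sparseGaussianLaw_sum_mul_ge_le hs0 hs1 hz hμ hμz)
        (measure_pi_sparseGaussianLaw_sum_mul_ge_le hs0 hs1 (by simpa only [neg_sq] using hz) hμ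
          (by simpa only [mul_neg, neg_sq] using hμz))
    _ = _ := by rw [← ENNReal.ofReal_add (by positivity) (by positivity), two_mul]

theorem measure_abs_sum_mul_ge_le_of_map_eq {Ω : Type*} [MeasurableSpace Ω] {P : Measure Ω}
    {a : Ω → ι → ℝ} (ha : Measurable a) (hmap : P.map a = Measure.pi fun _ => sparseGaussianLaw s)
    (hs0 : 0 < s) (hs1 : s ≤ 1) (hz : ∑ i, z i ^ 2 = 1) (hμ : 0 ≤ μ)
    (hμz : ∀ i, (μ / 2 * z i) ^ 2 ≤ 2 * s) :
    P {ω | μ ≤ |∑ i, a ω i * z i|} ≤ ENNReal.ofReal (2 * exp (-μ ^ 2 / 4)) := by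
  have hS : MeasurableSet {x : ι → ℝ | μ ≤ |∑ i, x i * z i|} :=
    measurableSet_le measurable_const (by fun_prop)
  calc P {ω | μ ≤ |∑ i, a ω i * z i|} = P.map a {x | μ ≤ |∑ i, x i * z i|} :=
        (Measure.map_apply ha hS).symm
    _ ≤ _ := hmap ▸ measure_pi_sparseGaussianLaw_abs_sum_mul_ge_le hs0 hs1 hz hμ hμz

end SparseGaussian

theorem sq_half_mul_le_of_le_div {s lam₀ μ z : ℝ} (hs : 0 ≤ s) (hlam₀ : 0 < lam₀) (hμ : 0 ≤ μ)
    (hμle : μ ≤ 2 * √(2 * s) / lam₀) (hz : |z| ≤ lam₀) : (μ / 2 * z) ^ 2 ≤ 2 * s := by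
  have h : |μ / 2 * z| ≤ √(2 * s) := calc
    |μ / 2 * z| = μ / 2 * |z| := by rw [abs_mul, abs_of_nonneg (by positivity)]
    _ ≤ μ / 2 * lam₀ := by gcongr
    _ ≤ √(2 * s) := by rw [le_div_iff₀ hlam₀] at hμle; linarith
  rw [← sq_abs]
  exact (Real.le_sqrt (abs_nonneg _) (by positivity)).1 h

theorem map_eval_of_map_eq_pi {Ω κ : Type*} [MeasurableSpace Ω] [Fintype κ] {X : κ → Type*}
    [∀ i, MeasurableSpace (X i)] {P : Measure Ω} {ν : ∀ i, Measure (X i)}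
    [∀ i, IsProbabilityMeasure (ν i)] {A : Ω → ∀ i, X i} (hA : Measurable A)
    (hmap : P.map A = Measure.pi ν) (i : κ) : P.map (fun ω => A ω i) = ν i := by
  change P.map (Function.eval i ∘ A) = ν i
  rw [← Measure.map_map (measurable_pi_apply i) hA, hmap, (measurePreserving_eval ν i).map_eq]

section LpNorms

variable {k : ℕ}

theorem sum_sq_eq_one_of_l2Norm_eq_one {x : Fin k → ℝ} (h : l2Norm x = 1) : ∑ i, x i ^ 2 = 1 :=
  Real.sqrt_eq_one.1 h

theorem abs_le_lInfNorm (x : Fin k → ℝ) (i : Fin k) : |x i| ≤ lInfNorm x :=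
  le_ciSup (f := fun i => |x i|) (Set.finite_range _).bddAbove i

theorem exists_le_abs_of_le_lInfNorm {x : Fin k → ℝ} {μ : ℝ} (hμ : 0 < μ) (h : μ ≤ lInfNorm x) :
    ∃ i, μ ≤ |x i| := by
  cases isEmpty_or_nonempty (Fin k)
  · rw [lInfNorm, Real.iSup_of_isEmpty] at h
    linarith
  · obtain ⟨i, hi⟩ := Finite.exists_max fun i => |x i|
    exact ⟨i, h.trans (ciSup_le hi)⟩

theorem measure_le_lInfNorm_le_sum {Ω : Type*} [MeasurableSpace Ω] (P : Measure Ω)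
    (v : Ω → Fin k → ℝ) {μ : ℝ} (hμ : 0 < μ) :
    P {ω | μ ≤ lInfNorm (v ω)} ≤ ∑ i, P {ω | μ ≤ |v ω i|} :=
  (measure_mono fun _ hω => Set.mem_iUnion.2 (exists_le_abs_of_le_lInfNorm hμ hω)).trans
    (measure_iUnion_fintype_le _ _)

end LpNorms

/-- Tail bound for a sparse Gaussian linear form, and the resulting
ℓ^∞ tail bound for a sparse Gaussian matrix. -/
theorem sparse_gaussian_tail_bound (n : ℕ) (s : ℝ) (hs0 : 0 < s) (hs1 : s ≤ 1)
    (lam₀ : ℝ) (hlam₀ : 0 < lam₀) (y : Fin n → ℝ) (hy2 : l2Norm y = 1)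
    (hyinf : lInfNorm y ≤ lam₀) :
    (∀ (Ω : Type) [MeasurableSpace Ω] (P : Measure Ω) [IsProbabilityMeasure P],
      ∀ a : Ω → Fin n → ℝ, Measurable a →
        P.map a = (Measure.pi fun _ : Fin n => sparseGaussianLaw s) →
        ∀ μ : ℝ, 0 < μ → μ ≤ 2 * Real.sqrt (2 * s) / lam₀ →
          P {ω | μ ≤ |∑ j, a ω j * y j|} ≤ ENNReal.ofReal (2 * Real.exp (-μ ^ 2 / 4))) ∧
    (∀ (m : ℕ) (Ω : Type) [MeasurableSpace Ω] (P : Measure Ω) [IsProbabilityMeasure P],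
      ∀ A : Ω → Fin m → Fin n → ℝ, Measurable A →
        P.map A = sparseGaussianMatrixLaw m n s →
        ∀ μ : ℝ, 0 < μ → μ ≤ 2 * Real.sqrt (2 * s) / lam₀ →
          P {ω | μ ≤ lInfNorm (matVec (A ω) y)} ≤
            ENNReal.ofReal (2 * (m : ℝ) * Real.exp (-μ ^ 2 / 4))) := by
  have hy := sum_sq_eq_one_of_l2Norm_eq_one hy2
  have hyμ : ∀ μ, 0 < μ → μ ≤ 2 * √(2 * s) / lam₀ → ∀ j, (μ / 2 * y j) ^ 2 ≤ 2 * s :=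
    fun μ hμ hμle j =>
      sq_half_mul_le_of_le_div hs0.le hlam₀ hμ.le hμle ((abs_le_lInfNorm y j).trans hyinf)
  refine ⟨fun Ω _ P _ a ha hmap μ hμ hμle =>
    measure_abs_sum_mul_ge_le_of_map_eq ha hmap hs0 hs1 hy hμ.le (hyμ μ hμ hμle), ?_⟩
  intro m Ω _ P _ A hA hmap μ hμ hμle
  have := isProbabilityMeasure_sparseGaussianLaw hs0.le hs1
  calc P {ω | μ ≤ lInfNorm (matVec (A ω) y)} ≤ ∑ i, P {ω | μ ≤ |matVec (A ω) y i|} :=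
        measure_le_lInfNorm_le_sum P _ hμ
    _ ≤ ∑ _ : Fin m, ENNReal.ofReal (2 * exp (-μ ^ 2 / 4)) := sum_le_sum fun i _ =>
        measure_abs_sum_mul_ge_le_of_map_eq (by fun_prop) (map_eval_of_map_eq_pi hA hmap i)
          hs0 hs1 hy hμ.le (hyμ μ hμ hμle)
    _ = ENNReal.ofReal (2 * m * exp (-μ ^ 2 / 4)) := by
        rw [sum_const, card_univ, Fintype.card_fin, nsmul_eq_mul, ← ENNReal.ofReal_natCast,
          ← ENNReal.ofReal_mul (by positivity), mul_left_comm, mul_assoc]
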